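/- Let L₁ ⊆ ℝ^n and L₂ ⊆ ℝ^k be polytopes in standard form and let f : ℝ^n → ℝ^k be an affine map with f(L₁) ⊆ L₂. Then f preserves the support preorder: for all x, y ∈ L₁ with supp(y) ⊆ supp(x), one has supp(f(y)) ⊆ supp(f(x)). Consequently, if y ∈ Conv(Vsupp(x)) (computed in L₁), then f(y) ∈ Conv(Vsupp(f(x))) (computed in L₂). -/

import Mathlib

/-- The support of a vector: the set of indices with nonzero coordinate. -/
def supp {n : ℕ} (x : Fin n → ℝ) : Set (Fin n) := {i | x i ≠ 0}

/-- A polytope in standard form: a bounded intersection of an affine subspace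
(given by linear equations `A x = b`) with the nonnegative orthant. -/
def StdForm {n : ℕ} (L : Set (Fin n → ℝ)) : Prop :=
  Bornology.IsBounded L ∧
    ∃ (k : ℕ) (A : Matrix (Fin k) (Fin n) ℝ) (b : Fin k → ℝ),
      L = {x | A.mulVec x = b ∧ ∀ i, 0 ≤ x i}

/-- The vertex support of `x` in `L`: the set of extreme points (vertices) of `L`
whose support is contained in the support of `x`. -/
def Vsupp {n : ℕ} (L : Set (Fin n → ℝ)) (x : Fin n → ℝ) : Set (Fin n → ℝ) :=
  {y ∈ Set.extremePoints ℝ L | supp y ⊆ supp x}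

/-!
If `supp y ⊆ supp x` in a standard-form polyhedron, one can move from `y` through `x` a little
further and stay inside, so `x` lies in an open segment with left end `y`. Affine maps preserve
open segments, and in the nonnegative orthant a point of an open segment has support containing
that of either end; this gives monotonicity of supports.

For the hull statement, the points of `L` with support inside `supp w` form a compact convex face
of `L` containing `w`; by Krein–Milman it is the closed convex hull of its extreme points, which are
vertices of `L` in `Vsupp L w`. A vertex is the only point of `L` with support inside its own, so
`L` has finitely many vertices and that convex hull is already closed.
-/

open Filter Topology Set

variable {m : Type*} {n : ℕ}

-- `StdForm L` says `L = stdPolyhedron A b` up to unfolding, so after `rfl` the lemmas below apply.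
def stdPolyhedron (A : Matrix m (Fin n) ℝ) (b : m → ℝ) : Set (Fin n → ℝ) :=
  {x | A.mulVec x = b ∧ ∀ i, 0 ≤ x i}

lemma supp_subset_of_mem_openSegment {a c x : Fin n → ℝ} (ha : 0 ≤ a) (hc : 0 ≤ c)
    (hx : x ∈ openSegment ℝ a c) : supp a ⊆ supp x := by
  obtain ⟨s, t, hs, ht, -, rfl⟩ := hx
  intro i hai hxi
  have hsum : s * a i + t * c i = 0 := by simpa [supp] using hxi
  have hai0 : 0 ≤ a i := ha i
  have hci0 : 0 ≤ c i := hc i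
  exact hai (by nlinarith)

lemma mem_openSegment_add_smul_sub {E : Type*} [AddCommGroup E] [Module ℝ E] (x y : E)
    {ε : ℝ} (hε : 0 < ε) : x ∈ openSegment ℝ y (x + ε • (x - y)) := by
  refine ⟨ε / (1 + ε), (1 + ε)⁻¹, by positivity, by positivity, by field_simp; ring, ?_⟩
  match_scalars <;> field_simp
  ring

namespace stdPolyhedron

variable {A : Matrix m (Fin n) ℝ} {b : m → ℝ}

lemma isClosed (A : Matrix m (Fin n) ℝ) (b : m → ℝ) : IsClosed (stdPolyhedron A b) :=
  (isClosed_eq A.mulVecLin.continuous_of_finiteDimensional continuous_const).inter isClosed_Ici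

lemma convex (A : Matrix m (Fin n) ℝ) (b : m → ℝ) : Convex ℝ (stdPolyhedron A b) :=
  ((convex_singleton b).linear_preimage A.mulVecLin).inter (convex_Ici 0)

lemma exists_add_smul_sub_mem {x y : Fin n → ℝ} (hx : x ∈ stdPolyhedron A b)
    (hy : y ∈ stdPolyhedron A b) (hyx : supp y ⊆ supp x) :
    ∃ ε > (0 : ℝ), x + ε • (x - y) ∈ stdPolyhedron A b := by
  have hcoord : ∀ i, ∀ᶠ ε in 𝓝 (0 : ℝ), 0 ≤ x i + ε * (x i - y i) := by
    intro i
    rcases (hx.2 i).eq_or_lt with hxi | hxi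
    · have hyi : y i = 0 := not_not.1 fun h => hyx h hxi.symm
      exact Eventually.of_forall fun ε => by simp [← hxi, hyi]
    · have hlim : Tendsto (fun ε : ℝ => x i + ε * (x i - y i)) (𝓝 0) (𝓝 (x i)) :=
        (continuous_const.add (continuous_id.mul continuous_const)).tendsto' _ _ (by simp)
      exact (hlim.eventually (lt_mem_nhds hxi)).mono fun _ h => h.le
  obtain ⟨ε, hpos, hε⟩ : ∃ ε : ℝ, (∀ i, 0 ≤ x i + ε * (x i - y i)) ∧ 0 < ε :=
    ((eventually_all.2 hcoord).filter_mono nhdsWithin_le_nhds |>.and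
      (self_mem_nhdsWithin (s := Ioi 0))).exists
  refine ⟨ε, hε, ?_, fun i => by simpa using hpos i⟩
  simp [Matrix.mulVec_add, Matrix.mulVec_sub, Matrix.mulVec_smul, hx.1, hy.1]

lemma eq_of_mem_extremePoints {v y : Fin n → ℝ} (hv : v ∈ (stdPolyhedron A b).extremePoints ℝ)
    (hy : y ∈ stdPolyhedron A b) (hyv : supp y ⊆ supp v) : y = v := by
  obtain ⟨ε, hε, hz⟩ := exists_add_smul_sub_mem hv.1 hy hyv
  exact hv.2 hy hz (mem_openSegment_add_smul_sub v y hε)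

lemma finite_extremePoints (A : Matrix m (Fin n) ℝ) (b : m → ℝ) :
    ((stdPolyhedron A b).extremePoints ℝ).Finite :=
  (toFinite _).of_finite_image fun _ hv _ hw hvw =>
    eq_of_mem_extremePoints hw hv.1 hvw.le

lemma supp_apply_subset_of_supp_subset {k : ℕ} {L : Set (Fin k → ℝ)} (hL : ∀ z ∈ L, 0 ≤ z)
    (f : (Fin n → ℝ) →ᵃ[ℝ] (Fin k → ℝ)) (hf : ∀ y ∈ stdPolyhedron A b, f y ∈ L)
    {x y : Fin n → ℝ} (hx : x ∈ stdPolyhedron A b) (hy : y ∈ stdPolyhedron A b)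
    (hyx : supp y ⊆ supp x) : supp (f y) ⊆ supp (f x) := by
  obtain ⟨ε, hε, hz⟩ := exists_add_smul_sub_mem hx hy hyx
  have hseg : f x ∈ openSegment ℝ (f y) (f (x + ε • (x - y))) := by
    rw [← image_openSegment]
    exact mem_image_of_mem f (mem_openSegment_add_smul_sub x y hε)
  exact supp_subset_of_mem_openSegment (hL _ (hf y hy)) (hL _ (hf _ hz)) hseg

end stdPolyhedron

lemma Vsupp_mono {L : Set (Fin n → ℝ)} {x y : Fin n → ℝ} (h : supp x ⊆ supp y) :
    Vsupp L x ⊆ Vsupp L y :=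
  fun _ hv => ⟨hv.1, hv.2.trans h⟩

lemma isClosed_setOf_supp_subset (s : Set (Fin n)) : IsClosed {z : Fin n → ℝ | supp z ⊆ s} := by
  have : {z : Fin n → ℝ | supp z ⊆ s} = ⋂ i ∈ sᶜ, {z | z i = 0} := by
    ext z
    simp [supp, subset_def, not_imp_comm]
  rw [this]
  exact isClosed_biInter fun i _ => isClosed_eq (continuous_apply i) continuous_const

lemma convex_setOf_supp_subset (s : Set (Fin n)) : Convex ℝ {z : Fin n → ℝ | supp z ⊆ s} := by
  intro x hx y hy a c _ _ _ i hi
  by_contra his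
  have hxi : x i = 0 := not_not.1 fun h => his (hx h)
  have hyi : y i = 0 := not_not.1 fun h => his (hy h)
  exact hi (by simp [hxi, hyi])

lemma isExtreme_setOf_supp_subset {L : Set (Fin n → ℝ)} (hL : ∀ z ∈ L, 0 ≤ z) (s : Set (Fin n)) :
    IsExtreme ℝ L {z ∈ L | supp z ⊆ s} :=
  ⟨sep_subset _ _, fun _ hx _ hy _ hz hseg =>
    ⟨hx, (supp_subset_of_mem_openSegment (hL _ hx) (hL _ hy) hseg).trans hz.2⟩⟩

lemma StdForm.mem_convexHull_Vsupp {L : Set (Fin n → ℝ)} (hL : StdForm L) {w : Fin n → ℝ}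
    (hw : w ∈ L) : w ∈ convexHull ℝ (Vsupp L w) := by
  obtain ⟨hbdd, k, A, b, rfl⟩ := hL
  set F := {z ∈ stdPolyhedron A b | supp z ⊆ supp w}
  have hFext : IsExtreme ℝ (stdPolyhedron A b) F :=
    isExtreme_setOf_supp_subset (fun _ hz i => hz.2 i) _
  have hFcomp : IsCompact F := Metric.isCompact_of_isClosed_isBounded
    ((stdPolyhedron.isClosed A b).inter (isClosed_setOf_supp_subset _)) (hbdd.subset hFext.1)
  have hFconv : Convex ℝ F := (stdPolyhedron.convex A b).inter (convex_setOf_supp_subset _)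
  have hVfin : (Vsupp (stdPolyhedron A b) w).Finite :=
    (stdPolyhedron.finite_extremePoints A b).subset fun _ hv => hv.1
  have hext : F.extremePoints ℝ ⊆ Vsupp (stdPolyhedron A b) w := by
    rw [hFext.extremePoints_eq]
    exact fun _ hv => ⟨hv.2, hv.1.2⟩
  have hwF : w ∈ F := ⟨hw, subset_rfl⟩
  rw [← closure_convexHull_extremePoints hFcomp hFconv] at hwF
  exact (hVfin.isClosed_convexHull ℝ).closure_subset_iff.2 (convexHull_mono hext) hwF

theorem stmt_4 {n k : ℕ} (L₁ : Set (Fin n → ℝ)) (L₂ : Set (Fin k → ℝ))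
    (h₁ : StdForm L₁) (h₂ : StdForm L₂)
    (f : (Fin n → ℝ) →ᵃ[ℝ] (Fin k → ℝ)) (hf : ∀ y ∈ L₁, f y ∈ L₂) :
    (∀ x ∈ L₁, ∀ y ∈ L₁, supp y ⊆ supp x → supp (f y) ⊆ supp (f x)) ∧
      (∀ x ∈ L₁, ∀ y ∈ convexHull ℝ (Vsupp L₁ x),
        f y ∈ convexHull ℝ (Vsupp L₂ (f x))) := by
  obtain ⟨-, m₁, A₁, b₁, rfl⟩ := h₁
  have hL₂ : ∀ z ∈ L₂, 0 ≤ z := by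
    obtain ⟨-, m₂, A₂, b₂, rfl⟩ := h₂
    exact fun _ hz i => hz.2 i
  have hsupp : ∀ x ∈ stdPolyhedron A₁ b₁, ∀ y ∈ stdPolyhedron A₁ b₁,
      supp y ⊆ supp x → supp (f y) ⊆ supp (f x) :=
    fun _ hx _ hy => stdPolyhedron.supp_apply_subset_of_supp_subset hL₂ f hf hx hy
  refine ⟨hsupp, fun x hx y hy => ?_⟩
  have hfy : f y ∈ convexHull ℝ (f '' Vsupp (stdPolyhedron A₁ b₁) x) := by
    rw [← f.image_convexHull]
    exact mem_image_of_mem f hy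
  refine convexHull_min ?_ (convex_convexHull ℝ _) hfy
  rintro _ ⟨v, ⟨hv, hvx⟩, rfl⟩
  exact convexHull_mono (Vsupp_mono (hsupp x hx v hv.1 hvx)) (h₂.mem_convexHull_Vsupp (hf v hv.1))
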